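/- arXiv:2007.00580 — 3 statements merged into one kernel-verified Lean document; each statement's English description precedes it below -/
import Mathlib

section
/- Let σ ∈ {+1, −1} and let ψ : ℝ → ℂ be such that p ↦ √|p|·ψ(p) is Lebesgue integrable. Define the clock unitary (U_C(r)ψ)(p) := e^{−i r s p²/2} · ψ(p) for r ∈ ℝ. Then for all r, t ∈ ℝ: (C_σ(U_C(r)ψ))(t) = (C_σψ)(t − r). Consequently, for every Borel set X ⊆ ℝ, every r ∈ ℝ, and all ψ, φ ∈ L²(ℝ; ℂ) with √|p|·ψ and √|p|·φ integrable, Σ_{σ∈{+1,−1}} (1/2π) ∫_{r+X} conj((C_σψ)(t)) (C_σφ)(t) dt = Σ_{σ∈{+1,−1}} (1/2π) ∫_X conj((C_σ(U_C(−r)ψ))(t)) (C_σ(U_C(−r)φ))(t) dt; i.e., the effect operators E_T(X) of the clock POVM satisfy the covariance relation E_T(X + r) = U_C(r) E_T(X) U_C(r)† with respect to the group generated by the quadratic clock Hamiltonian. -/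
open MeasureTheory

/-- The clock transform `(C_σψ)(t) = ∫ √|p| · 1_{σp≤0}(p) · e^{i t s p²/2} · ψ(p) dp`,
i.e. the overlap `⟨t,σ|ψ⟩` with the covariant clock state of reading `t` in the
`σ`-frequency sector, for clock Hamiltonian `H_C = s p²/2`. -/
noncomputable def clockTransform (s σ : ℝ) (ψ : ℝ → ℂ) (t : ℝ) : ℂ :=
  ∫ p : ℝ, (Real.sqrt |p| : ℂ) * (if σ * p ≤ 0 then (1 : ℂ) else 0) *
    Complex.exp (Complex.I * t * s * p ^ 2 / 2) * ψ p

/-- The clock unitary `(U_C(r)ψ)(p) = e^{−i r s p²/2}·ψ(p)` generated by the quadratic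
clock Hamiltonian `H_C = s p²/2`, in momentum representation. -/
noncomputable def clockUnitary (s r : ℝ) (ψ : ℝ → ℂ) (p : ℝ) : ℂ :=
  Complex.exp (-(Complex.I * r * s * p ^ 2 / 2)) * ψ p

theorem clockTransform_clockUnitary (s σ : ℝ) (ψ : ℝ → ℂ) (r t : ℝ) :
    clockTransform s σ (clockUnitary s r ψ) t = clockTransform s σ ψ (t - r) := by
  unfold clockTransform clockUnitary
  congr 1
  funext p
  have phase_split : Complex.exp (Complex.I * ((t - r : ℝ) : ℂ) * s * p ^ 2 / 2)
      = Complex.exp (Complex.I * t * s * p ^ 2 / 2) *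
        Complex.exp (-(Complex.I * r * s * p ^ 2 / 2)) := by
    rw [← Complex.exp_add]; congr 1; push_cast; ring
  rw [phase_split]
  ring

theorem setIntegral_image_add_left {G E : Type*} [AddGroup G] [MeasurableSpace G]
    [MeasurableAdd G] [NormedAddCommGroup E] [NormedSpace ℝ E] (μ : Measure G)
    [μ.IsAddLeftInvariant] (X : Set G) (r : G) (f : G → E) :
    ∫ t in (fun u => r + u) '' X, f t ∂μ = ∫ u in X, f (r + u) ∂μ :=
  (measurePreserving_add_left μ r).setIntegral_image_emb (measurableEmbedding_addLeft r) f X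

theorem setIntegral_clockTransform_image_add_left (s σ : ℝ) (X : Set ℝ) (r : ℝ)
    (ψ φ : ℝ → ℂ) :
    ∫ t in (fun u => r + u) '' X,
        starRingEnd ℂ (clockTransform s σ ψ t) * clockTransform s σ φ t
      = ∫ t in X, starRingEnd ℂ (clockTransform s σ (clockUnitary s (-r) ψ) t) *
          clockTransform s σ (clockUnitary s (-r) φ) t := by
  simp only [setIntegral_image_add_left, clockTransform_clockUnitary, sub_neg_eq_add, add_comm]

theorem clock_povm_covariance_general (s : ℝ) :
    (∀ ψ : ℝ → ℂ, Integrable (fun p : ℝ => (Real.sqrt |p| : ℂ) * ψ p) →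
      ∀ σ : ℝ, (σ = 1 ∨ σ = -1) → ∀ r t : ℝ,
        clockTransform s σ (clockUnitary s r ψ) t = clockTransform s σ ψ (t - r)) ∧
    (∀ X : Set ℝ, MeasurableSet X → ∀ r : ℝ, ∀ ψ φ : ℝ → ℂ,
      MemLp ψ 2 (volume : Measure ℝ) → MemLp φ 2 (volume : Measure ℝ) →
      Integrable (fun p : ℝ => (Real.sqrt |p| : ℂ) * ψ p) →
      Integrable (fun p : ℝ => (Real.sqrt |p| : ℂ) * φ p) →
      (1 / (2 * Real.pi) : ℂ) *
          (∫ t in (fun u : ℝ => r + u) '' X,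
            starRingEnd ℂ (clockTransform s 1 ψ t) * clockTransform s 1 φ t) +
        (1 / (2 * Real.pi) : ℂ) *
          (∫ t in (fun u : ℝ => r + u) '' X,
            starRingEnd ℂ (clockTransform s (-1) ψ t) * clockTransform s (-1) φ t)
      = (1 / (2 * Real.pi) : ℂ) *
          (∫ t in X, starRingEnd ℂ (clockTransform s 1 (clockUnitary s (-r) ψ) t) *
            clockTransform s 1 (clockUnitary s (-r) φ) t) +
        (1 / (2 * Real.pi) : ℂ) *
          (∫ t in X, starRingEnd ℂ (clockTransform s (-1) (clockUnitary s (-r) ψ) t) *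
            clockTransform s (-1) (clockUnitary s (-r) φ) t)) :=
  ⟨fun ψ _ σ _ r t => clockTransform_clockUnitary s σ ψ r t,
    fun X _ r ψ φ _ _ _ _ => by
      rw [setIntegral_clockTransform_image_add_left, setIntegral_clockTransform_image_add_left]⟩

/-- Covariance of the clock POVM: the clock states transform covariantly,
`(C_σ(U_C(r)ψ))(t) = (C_σψ)(t − r)`, and consequently the effect operators satisfy
`E_T(X + r) = U_C(r) E_T(X) U_C(r)†`. -/
theorem clock_povm_covariance (s : ℝ) (hs : s = 1 ∨ s = -1) :
    (∀ ψ : ℝ → ℂ, Integrable (fun p : ℝ => (Real.sqrt |p| : ℂ) * ψ p) →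
      ∀ σ : ℝ, (σ = 1 ∨ σ = -1) → ∀ r t : ℝ,
        clockTransform s σ (clockUnitary s r ψ) t = clockTransform s σ ψ (t - r)) ∧
    (∀ X : Set ℝ, MeasurableSet X → ∀ r : ℝ, ∀ ψ φ : ℝ → ℂ,
      MemLp ψ 2 (volume : Measure ℝ) → MemLp φ 2 (volume : Measure ℝ) →
      Integrable (fun p : ℝ => (Real.sqrt |p| : ℂ) * ψ p) →
      Integrable (fun p : ℝ => (Real.sqrt |p| : ℂ) * φ p) →
      (1 / (2 * Real.pi) : ℂ) *
          (∫ t in (fun u : ℝ => r + u) '' X,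
            starRingEnd ℂ (clockTransform s 1 ψ t) * clockTransform s 1 φ t) +
        (1 / (2 * Real.pi) : ℂ) *
          (∫ t in (fun u : ℝ => r + u) '' X,
            starRingEnd ℂ (clockTransform s (-1) ψ t) * clockTransform s (-1) φ t)
      = (1 / (2 * Real.pi) : ℂ) *
          (∫ t in X, starRingEnd ℂ (clockTransform s 1 (clockUnitary s (-r) ψ) t) *
            clockTransform s 1 (clockUnitary s (-r) φ) t) +
        (1 / (2 * Real.pi) : ℂ) *
          (∫ t in X, starRingEnd ℂ (clockTransform s (-1) (clockUnitary s (-r) ψ) t) *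
            clockTransform s (-1) (clockUnitary s (-r) φ) t)) :=
  clock_povm_covariance_general s
end

section
/- Suppose ψ ∈ D(T̂), ψ(p)/√|p| → 0 as |p| → ∞, and both p ↦ √|p|·ψ(p) and p ↦ √|p|·(T̂ψ)(p) are Lebesgue integrable. Then for every t ∈ ℝ and every σ ∈ {+1, −1}: (C_σ(T̂ψ))(t) = t · (C_σψ)(t). (The covariant clock states are weak eigenstates of the covariant time operator: ⟨ψ| T̂ |t,σ⟩ = t · ⟨ψ|t,σ⟩ for all ψ in the domain of T̂, even though they are not eigenstates.) -/
open MeasureTheory Filter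

/-- The covariant time operator `(T̂ψ)(p) = i·s·(ψ′(p)/p − ψ(p)/(2p²))` in momentum
representation (symmetric ordering `(s/2)(t̂ p̂⁻¹ + p̂⁻¹ t̂)`). -/
noncomputable def timeOp (s : ℝ) (ψ : ℝ → ℂ) (p : ℝ) : ℂ :=
  Complex.I * (s : ℂ) * (deriv ψ p / (p : ℂ) - ψ p / (2 * (p : ℂ) ^ 2))

/-- The domain `D(T̂)` of the covariant time operator:  `ψ ∈ L²(ℝ)`, `ψ` differentiable
away from `0`, `ψ(p)/√|p| → 0` as `p → 0`, and `∫ |p|⁻¹·|d/dp(ψ(p)/√|p|)|² dp < ∞`. -/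
def MemDomTimeOp (ψ : ℝ → ℂ) : Prop :=
  MemLp ψ 2 (volume : Measure ℝ) ∧
  (∀ p : ℝ, p ≠ 0 → DifferentiableAt ℝ ψ p) ∧
  Tendsto (fun p : ℝ => ψ p / (Real.sqrt |p| : ℂ)) (nhdsWithin 0 {(0 : ℝ)}ᶜ) (nhds 0) ∧
  Integrable (fun p : ℝ =>
    |p|⁻¹ * ‖deriv (fun q : ℝ => ψ q / (Real.sqrt |q| : ℂ)) p‖ ^ 2)

/-! Away from `p = 0` the integrand `√|p| e^{its p²/2} (T̂ψ - tψ)` of `C_σ((T̂ - t)ψ)` is the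
derivative of `G(p) = i s sgn(p) e^{its p²/2} ψ(p)/√|p|`: in momentum representation
`T̂ = i s sgn(p) |p|^{-1/2} ∘ d/dp ∘ |p|^{-1/2}`, and differentiating the phase produces the `-tψ`
term. The boundary conditions on `ψ/√|p|` make `G` vanish at `0` and at `±∞`, so the fundamental
theorem of calculus on the half-line of the `σ`-sector gives `C_σ((T̂ - t)ψ)(t) = 0`. -/

open Set Topology

noncomputable def clockPhase (s t p : ℝ) : ℂ := Complex.exp (Complex.I * t * s * p ^ 2 / 2)

lemma norm_clockPhase (s t p : ℝ) : ‖clockPhase s t p‖ = 1 := by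
  rw [clockPhase, show Complex.I * t * s * p ^ 2 / 2 = ((t * s * p ^ 2 / 2 : ℝ) : ℂ) * Complex.I by
    push_cast; ring]
  exact Complex.norm_exp_ofReal_mul_I _

lemma continuous_clockPhase (s t : ℝ) : Continuous (clockPhase s t) := by
  unfold clockPhase; fun_prop

lemma hasDerivAt_clockPhase (s t p : ℝ) :
    HasDerivAt (clockPhase s t) (Complex.I * t * s * p * clockPhase s t p) p := by
  have hsq : HasDerivAt (fun q : ℝ => (q : ℂ) ^ 2) (2 * (p : ℂ)) p := by
    simpa using (hasDerivAt_pow 2 (p : ℂ)).comp_ofReal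
  show HasDerivAt (fun q : ℝ => Complex.exp (Complex.I * t * s * (q : ℂ) ^ 2 / 2)) _ p
  convert ((hsq.const_mul (Complex.I * t * s)).div_const 2).cexp using 1
  rw [clockPhase]; ring

lemma eventually_sign_eq {p : ℝ} (hp : p ≠ 0) : ∀ᶠ q in 𝓝 p, SignType.sign q = SignType.sign p :=
  (continuousAt_sign_of_ne_zero hp).eventually_mem
    (isOpen_discrete {SignType.sign p} |>.mem_nhds rfl)

lemma sq_sign_eq_one {p : ℝ} (hp : p ≠ 0) : ((SignType.sign p : ℝ) : ℂ) ^ 2 = 1 := by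
  rcases hp.lt_or_gt with h | h <;> simp [sign_neg, sign_pos, h]

lemma ofReal_eq_sign_mul_sq_sqrt_abs (p : ℝ) :
    (p : ℂ) = (SignType.sign p : ℝ) * (√|p| : ℂ) ^ 2 := by
  rw [← Complex.ofReal_pow, Real.sq_sqrt (abs_nonneg p), ← Complex.ofReal_mul, sign_mul_abs]

lemma ofReal_sqrt_abs_ne_zero {p : ℝ} (hp : p ≠ 0) : (√|p| : ℂ) ≠ 0 := by
  simpa [Real.sqrt_eq_zero', not_le] using hp

lemma hasDerivAt_sqrt_abs {p : ℝ} (hp : p ≠ 0) :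
    HasDerivAt (fun q : ℝ => √|q|) (SignType.sign p / (2 * √|p|)) p :=
  (hasDerivAt_abs hp).sqrt (abs_ne_zero.mpr hp)

lemma hasDerivAt_div_sqrt_abs {s : ℝ} (hs : s ^ 2 = 1) {ψ : ℝ → ℂ} {p : ℝ} (hp : p ≠ 0)
    (hψ : DifferentiableAt ℝ ψ p) :
    HasDerivAt (fun q : ℝ => ψ q / (√|q| : ℂ))
      (-(Complex.I * s * (SignType.sign p : ℝ)) * (√|p| * timeOp s ψ p)) p := by
  have hr := ofReal_sqrt_abs_ne_zero hp
  refine (hψ.hasDerivAt.div (hasDerivAt_sqrt_abs hp).ofReal_comp hr).congr_deriv ?_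
  have hsign := sq_sign_eq_one hp
  have hε : ((SignType.sign p : ℝ) : ℂ) ≠ 0 := by
    rintro h; simp [h] at hsign
  have hs' : (s : ℂ) ^ 2 = 1 := by exact_mod_cast hs
  unfold timeOp
  push_cast
  rw [ofReal_eq_sign_mul_sq_sqrt_abs p]
  field_simp
  linear_combination (deriv ψ p * (√|p| : ℂ) ^ 2 * (SignType.sign p : ℝ) * 2 - ψ p)
      * ((s : ℂ) ^ 2 * Complex.I_sq - hs') - ψ p * hsign

noncomputable def clockPrimitive (s t : ℝ) (ψ : ℝ → ℂ) (p : ℝ) : ℂ :=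
  Complex.I * s * (SignType.sign p : ℝ) * clockPhase s t p * (ψ p / √|p|)

lemma hasDerivAt_clockPrimitive {s : ℝ} (hs : s ^ 2 = 1) (t : ℝ) {ψ : ℝ → ℂ} {p : ℝ}
    (hp : p ≠ 0) (hψ : DifferentiableAt ℝ ψ p) :
    HasDerivAt (clockPrimitive s t ψ)
      (√|p| * clockPhase s t p * (timeOp s ψ p - t * ψ p)) p := by
  have hlocal : (fun q => Complex.I * s * (SignType.sign p : ℝ) *
      (clockPhase s t q * (ψ q / √|q|))) =ᶠ[𝓝 p] clockPrimitive s t ψ := by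
    filter_upwards [eventually_sign_eq hp] with q hq
    rw [clockPrimitive, hq]; ring
  refine ((((hasDerivAt_clockPhase s t p).mul (hasDerivAt_div_sqrt_abs hs hp hψ)).const_mul
    _).congr_of_eventuallyEq hlocal.symm).congr_deriv ?_
  have hr := ofReal_sqrt_abs_ne_zero hp
  have hsign := sq_sign_eq_one hp
  have hs' : (s : ℂ) ^ 2 = 1 := by exact_mod_cast hs
  rw [ofReal_eq_sign_mul_sq_sqrt_abs p]
  field_simp
  linear_combination clockPhase s t p * (t * ψ p - timeOp s ψ p) *
    ((s : ℂ) ^ 2 * (SignType.sign p : ℝ) ^ 2 * Complex.I_sq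
      - ((SignType.sign p : ℝ) : ℂ) ^ 2 * hs' - hsign)

lemma tendsto_clockPrimitive {s t : ℝ} {ψ : ℝ → ℂ} {l : Filter ℝ}
    (hψ : Tendsto (fun p : ℝ => ψ p / (√|p| : ℂ)) l (𝓝 0)) :
    Tendsto (clockPrimitive s t ψ) l (𝓝 0) := by
  refine squeeze_zero_norm (a := fun p => |s| * ‖ψ p / (√|p| : ℂ)‖) (fun p => ?_) ?_
  · have hsign : ‖((SignType.sign p : ℝ) : ℂ)‖ ≤ 1 := by
      rcases lt_trichotomy p 0 with h | h | h <;> simp [sign_neg, sign_pos, h]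
    rw [clockPrimitive, norm_mul, norm_mul, norm_mul, norm_mul, norm_clockPhase, Complex.norm_I,
      Complex.norm_real, Real.norm_eq_abs, one_mul, mul_one]
    gcongr
    exact mul_le_of_le_one_right (abs_nonneg s) hsign
  · simpa using (hψ.norm.const_mul |s|)

lemma continuousAt_clockPrimitive_zero {s t : ℝ} {ψ : ℝ → ℂ}
    (hψ : Tendsto (fun p : ℝ => ψ p / (√|p| : ℂ)) (𝓝[≠] 0) (𝓝 0)) :
    ContinuousAt (clockPrimitive s t ψ) 0 := by
  rw [← continuousWithinAt_compl_self, ContinuousWithinAt]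
  simpa [clockPrimitive] using tendsto_clockPrimitive (s := s) (t := t) hψ

lemma clockTransform_eq_setIntegral (s σ : ℝ) (χ : ℝ → ℂ) (t : ℝ) :
    clockTransform s σ χ t = ∫ p in {p | σ * p ≤ 0}, √|p| * clockPhase s t p * χ p := by
  rw [clockTransform, ← integral_indicator (measurableSet_le (by fun_prop) (by fun_prop))]
  congr 1 with p
  by_cases hp : σ * p ≤ 0 <;> simp [hp, clockPhase]

lemma integrable_sqrt_abs_mul_clockPhase_mul (s t : ℝ) {χ : ℝ → ℂ}
    (hχ : Integrable (fun p : ℝ => (√|p| : ℂ) * χ p)) :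
    Integrable (fun p => √|p| * clockPhase s t p * χ p) :=
  (hχ.bdd_mul (continuous_clockPhase s t).aestronglyMeasurable
    (ae_of_all _ fun p => (norm_clockPhase s t p).le)).congr (ae_of_all _ fun p => by ring)

lemma clockTransform_timeOp_sub {s : ℝ} {ψ : ℝ → ℂ}
    (h1 : Integrable (fun p : ℝ => (√|p| : ℂ) * ψ p))
    (h2 : Integrable (fun p : ℝ => (√|p| : ℂ) * timeOp s ψ p)) (σ t : ℝ) :
    clockTransform s σ (timeOp s ψ) t - t * clockTransform s σ ψ t =
      ∫ p in {p | σ * p ≤ 0}, √|p| * clockPhase s t p * (timeOp s ψ p - t * ψ p) := by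
  rw [clockTransform_eq_setIntegral, clockTransform_eq_setIntegral, ← integral_const_mul,
    ← integral_sub (integrable_sqrt_abs_mul_clockPhase_mul s t h2).integrableOn
      ((integrable_sqrt_abs_mul_clockPhase_mul s t h1).integrableOn.const_mul _)]
  congr 1 with p
  ring

/-- The covariant clock states are weak eigenstates of the covariant time operator:
`⟨ψ| T̂ |t,σ⟩ = t·⟨ψ|t,σ⟩` for all `ψ` in the domain of `T̂`. -/
theorem clock_states_weak_eigenstates
    (s : ℝ) (hs : s = 1 ∨ s = -1) (ψ : ℝ → ℂ)
    (hdom : MemDomTimeOp ψ)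
    (hinf : Tendsto (fun p : ℝ => ψ p / (Real.sqrt |p| : ℂ)) (cocompact ℝ) (nhds 0))
    (h1 : Integrable (fun p : ℝ => (Real.sqrt |p| : ℂ) * ψ p))
    (h2 : Integrable (fun p : ℝ => (Real.sqrt |p| : ℂ) * timeOp s ψ p)) :
    ∀ t σ : ℝ, (σ = 1 ∨ σ = -1) →
      clockTransform s σ (timeOp s ψ) t = (t : ℂ) * clockTransform s σ ψ t := by
  obtain ⟨-, hdiff, hzero, -⟩ := hdom
  intro t σ hσ
  have hs2 : s ^ 2 = 1 := by rcases hs with rfl | rfl <;> norm_num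
  have hderiv : ∀ p ≠ 0, HasDerivAt (clockPrimitive s t ψ)
      (√|p| * clockPhase s t p * (timeOp s ψ p - t * ψ p)) p :=
    fun p hp => hasDerivAt_clockPrimitive hs2 t hp (hdiff p hp)
  have hcont : ContinuousAt (clockPrimitive s t ψ) 0 := continuousAt_clockPrimitive_zero hzero
  have hprim0 : clockPrimitive s t ψ 0 = 0 := by simp [clockPrimitive]
  have hdefect : Integrable (fun p => √|p| * (timeOp s ψ p - t * ψ p)) :=
    (h2.sub (h1.const_mul (t : ℂ))).congr (ae_of_all _ fun p => by simp only [Pi.sub_apply]; ring)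
  replace hdefect := integrable_sqrt_abs_mul_clockPhase_mul s t hdefect
  rw [cocompact_eq_atBot_atTop, tendsto_sup] at hinf
  rw [← sub_eq_zero, clockTransform_timeOp_sub h1 h2]
  rcases hσ with rfl | rfl
  · simp only [one_mul]
    change ∫ p in Iic 0, _ = 0
    rw [integral_Iic_of_hasDerivAt_of_tendsto hcont.continuousWithinAt
      (fun p hp => hderiv p hp.ne) hdefect.integrableOn (tendsto_clockPrimitive hinf.1), hprim0,
      sub_zero]
  · simp only [neg_mul, one_mul, neg_nonpos]
    change ∫ p in Ici 0, _ = 0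
    rw [integral_Ici_eq_integral_Ioi, integral_Ioi_of_hasDerivAt_of_tendsto
      hcont.continuousWithinAt (fun p hp => hderiv p hp.ne') hdefect.integrableOn
      (tendsto_clockPrimitive hinf.2), hprim0, sub_zero]
end

section
/- For ψ, φ ∈ L²(ℝ; ℂ) with p ↦ √|p|·ψ(p) and p ↦ √|p|·φ(p) integrable and any Borel set X ⊆ ℝ, define the effect pairing ⟨ψ, E_T(X) φ⟩ := Σ_{σ∈{+1,−1}} (1/2π) ∫_X conj((C_σψ)(t)) · (C_σφ)(t) dt. For σ′ ∈ {+1, −1} let Θ_{σ′} denote multiplication by the indicator function of {p ∈ ℝ : σ′p ≤ 0}. Then for all such ψ, φ, all Borel X, and all σ′: ⟨Θ_{σ′}ψ, E_T(X) φ⟩ = ⟨ψ, E_T(X) (Θ_{σ′}φ)⟩, and both sides equal (1/2π) ∫_X conj((C_{σ′}ψ)(t)) · (C_{σ′}φ)(t) dt. (The effect operators of the covariant clock POVM commute with the projectors onto the positive- and negative-frequency sectors, so the clock reading and the frequency sector can be simultaneously determined.) -/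
open MeasureTheory

/-- The effect pairing `⟨ψ, E_T(X) φ⟩ = Σ_σ (1/2π) ∫_X conj((C_σψ)(t))·(C_σφ)(t) dt`
of the covariant clock POVM. -/
noncomputable def effectPairing (s : ℝ) (X : Set ℝ) (ψ φ : ℝ → ℂ) : ℂ :=
  (1 / (2 * Real.pi) : ℂ) *
      (∫ t in X, starRingEnd ℂ (clockTransform s 1 ψ t) * clockTransform s 1 φ t) +
    (1 / (2 * Real.pi) : ℂ) *
      (∫ t in X, starRingEnd ℂ (clockTransform s (-1) ψ t) * clockTransform s (-1) φ t)

/-- Multiplication `Θ_σ′` by the indicator function of `{p : σ′p ≤ 0}`, i.e. the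
projector onto the `σ′`-frequency sector in momentum representation. -/
noncomputable def sectorProj (σ' : ℝ) (ψ : ℝ → ℂ) (p : ℝ) : ℂ :=
  if σ' * p ≤ 0 then ψ p else 0

/-
Sector `σ` of the clock transform only sees momenta with `σ p ≤ 0`, and two opposite sectors
meet only at `p = 0`, where the weight `√|p|` vanishes. Hence `Θ_σ` leaves `C_σ` unchanged and
annihilates `C_{-σ}`, so on either side only the `σ` summand of the effect pairing survives.
-/

section SectorProjection

variable {σ σ' : ℝ}

noncomputable def sectorEffectPairing (s σ : ℝ) (X : Set ℝ) (ψ φ : ℝ → ℂ) : ℂ :=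
  (1 / (2 * Real.pi) : ℂ) *
    ∫ t in X, starRingEnd ℂ (clockTransform s σ ψ t) * clockTransform s σ φ t

theorem effectPairing_eq_add (s : ℝ) (X : Set ℝ) (ψ φ : ℝ → ℂ) :
    effectPairing s X ψ φ = sectorEffectPairing s 1 X ψ φ + sectorEffectPairing s (-1) X ψ φ :=
  rfl

theorem clockTransform_sectorProj_self (s σ : ℝ) (ψ : ℝ → ℂ) (t : ℝ) :
    clockTransform s σ (sectorProj σ ψ) t = clockTransform s σ ψ t := by
  unfold clockTransform sectorProj
  congr 1 with p
  split_ifs <;> simp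

theorem eq_zero_of_mul_nonpos_of_mul_nonpos (h : σ * σ' < 0) {p : ℝ}
    (hσ : σ * p ≤ 0) (hσ' : σ' * p ≤ 0) : p = 0 := by
  have hprod : 0 ≤ σ * σ' * p ^ 2 := by nlinarith [mul_nonneg_of_nonpos_of_nonpos hσ hσ']
  exact pow_eq_zero_iff two_ne_zero |>.mp <| le_antisymm
    (nonpos_of_mul_nonneg_right hprod h) (sq_nonneg p)

theorem clockTransform_sectorProj_of_mul_neg (s : ℝ) (h : σ * σ' < 0) (ψ : ℝ → ℂ) (t : ℝ) :
    clockTransform s σ (sectorProj σ' ψ) t = 0 := by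
  refine integral_eq_zero_of_ae (Filter.Eventually.of_forall fun p => ?_)
  simp only [sectorProj]
  split_ifs with hσ hσ'
  · simp [eq_zero_of_mul_nonpos_of_mul_nonpos h hσ hσ']
  all_goals simp

theorem sectorEffectPairing_sectorProj_left_self (s σ : ℝ) (X : Set ℝ) (ψ φ : ℝ → ℂ) :
    sectorEffectPairing s σ X (sectorProj σ ψ) φ = sectorEffectPairing s σ X ψ φ := by
  simp only [sectorEffectPairing, clockTransform_sectorProj_self]

theorem sectorEffectPairing_sectorProj_right_self (s σ : ℝ) (X : Set ℝ) (ψ φ : ℝ → ℂ) :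
    sectorEffectPairing s σ X ψ (sectorProj σ φ) = sectorEffectPairing s σ X ψ φ := by
  simp only [sectorEffectPairing, clockTransform_sectorProj_self]

theorem sectorEffectPairing_sectorProj_left_of_mul_neg (s : ℝ) (h : σ * σ' < 0) (X : Set ℝ)
    (ψ φ : ℝ → ℂ) : sectorEffectPairing s σ X (sectorProj σ' ψ) φ = 0 := by
  simp [sectorEffectPairing, clockTransform_sectorProj_of_mul_neg s h]

theorem sectorEffectPairing_sectorProj_right_of_mul_neg (s : ℝ) (h : σ * σ' < 0) (X : Set ℝ)
    (ψ φ : ℝ → ℂ) : sectorEffectPairing s σ X ψ (sectorProj σ' φ) = 0 := by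
  simp [sectorEffectPairing, clockTransform_sectorProj_of_mul_neg s h]

theorem effectPairing_sectorProj_left (s : ℝ) (hσ : σ = 1 ∨ σ = -1) (X : Set ℝ)
    (ψ φ : ℝ → ℂ) :
    effectPairing s X (sectorProj σ ψ) φ = sectorEffectPairing s σ X ψ φ := by
  rcases hσ with rfl | rfl <;>
    simp [effectPairing_eq_add, sectorEffectPairing_sectorProj_left_self,
      sectorEffectPairing_sectorProj_left_of_mul_neg]

theorem effectPairing_sectorProj_right (s : ℝ) (hσ : σ = 1 ∨ σ = -1) (X : Set ℝ)
    (ψ φ : ℝ → ℂ) :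
    effectPairing s X ψ (sectorProj σ φ) = sectorEffectPairing s σ X ψ φ := by
  rcases hσ with rfl | rfl <;>
    simp [effectPairing_eq_add, sectorEffectPairing_sectorProj_right_self,
      sectorEffectPairing_sectorProj_right_of_mul_neg]

end SectorProjection

theorem effect_commutes_with_sector_projectors_general
    (s : ℝ)
    (ψ φ : ℝ → ℂ)
    (X : Set ℝ)
    (σ' : ℝ) (hσ' : σ' = 1 ∨ σ' = -1) :
    effectPairing s X (sectorProj σ' ψ) φ = effectPairing s X ψ (sectorProj σ' φ) ∧
    effectPairing s X (sectorProj σ' ψ) φ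
      = (1 / (2 * Real.pi) : ℂ) *
          (∫ t in X, starRingEnd ℂ (clockTransform s σ' ψ t) * clockTransform s σ' φ t) :=
  ⟨(effectPairing_sectorProj_left s hσ' X ψ φ).trans
      (effectPairing_sectorProj_right s hσ' X ψ φ).symm,
    effectPairing_sectorProj_left s hσ' X ψ φ⟩

/-- The effect operators of the covariant clock POVM commute with the projectors onto
the positive- and negative-frequency sectors, so the clock reading and the frequency
sector can be simultaneously determined. -/
theorem effect_commutes_with_sector_projectors
    (s : ℝ) (hs : s = 1 ∨ s = -1)
    (ψ φ : ℝ → ℂ)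
    (hψ2 : MemLp ψ 2 (volume : Measure ℝ))
    (hφ2 : MemLp φ 2 (volume : Measure ℝ))
    (hψ1 : Integrable (fun p : ℝ => (Real.sqrt |p| : ℂ) * ψ p))
    (hφ1 : Integrable (fun p : ℝ => (Real.sqrt |p| : ℂ) * φ p))
    (X : Set ℝ) (hX : MeasurableSet X)
    (σ' : ℝ) (hσ' : σ' = 1 ∨ σ' = -1) :
    effectPairing s X (sectorProj σ' ψ) φ = effectPairing s X ψ (sectorProj σ' φ) ∧
    effectPairing s X (sectorProj σ' ψ) φ
      = (1 / (2 * Real.pi) : ℂ) *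
          (∫ t in X, starRingEnd ℂ (clockTransform s σ' ψ t) * clockTransform s σ' φ t) :=
  effect_commutes_with_sector_projectors_general s ψ φ X σ' hσ'
end
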